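/- arXiv:1602.04887 — 6 statements merged into one kernel-verified Lean document; each statement's English description precedes it below -/
import Mathlib

section
/- For every positive integer N and p in (0, 1/N), the Abelian distribution is a probability distribution: the sum over b from 1 to N of C_{N,p} * binomial(N-1, b-1) * p^{b-1} * (1-b*p)^{N-b-1} * b^{b-2} equals 1, where C_{N,p} = (1-N*p)/(1-(N-1)*p). -/
/-- Density of the Abelian distribution with parameters `N` and `p`,
evaluated at `b`. -/
noncomputable def abelianP (N : ℕ) (p : ℝ) (b : ℕ) : ℝ :=
  ((1 - N * p) / (1 - ((N : ℝ) - 1) * p)) * ((N - 1).choose (b - 1)) *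
    p ^ (b - 1) * (1 - b * p) ^ ((N : ℤ) - b - 1) * (b : ℝ) ^ ((b : ℤ) - 2)

/-!
With `n = N - 1` and `k = b - 1` the claim is
`S := ∑ₖ C(n,k) (k+1)^(k-1) p^k (1-(k+1)p)^(n-k-1) = (1 - n p) / (1 - (n+1) p)`.
It rests on the case `x = z = p`, `y = w + n p` of Abel's identity
`∑ₖ C(n,k) x (x + k z)^(k-1) (y - k z)^(n-k) = (x + y)^n`, which is proved by induction on `n`:
both sides have derivative `n` times the previous case at `w + p`, and they agree at
`w = -(n+1) p`, where the left side is an `n`-th forward difference of a polynomial of degree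
`n - 1`. Writing `1 - (k+1)p = (1 - (n+1)p) + (n-k)p` in each summand of `S` and using
`(n-k) C(n,k) = n C(n-1,k)`, Abel's identity at `w = 1 - (n+1)p` for `n` and for `n - 1` gives
`1 = (1 - (n+1)p) S + n p`.
-/

open Finset

theorem sum_neg_one_pow_mul_choose_mul_pow_eq_zero {R : Type*} [CommRing R] {j n : ℕ}
    (h : j < n) (y : R) :
    ∑ k ∈ range (n + 1), (-1) ^ (n - k) * (n.choose k : R) * (y + k) ^ j = 0 := by
  have := congr_fun (fwdDiff_iter_pow_eq_zero_of_lt (R := R) h) y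
  rw [fwdDiff_iter_eq_sum_shift] at this
  simpa [zsmul_eq_mul, nsmul_eq_mul] using this

-- At `k = 0` the truncated exponent `k - 1 = 0` gives `1`, as does `x * x⁻¹` in Abel's identity.
noncomputable def abelWeight (p : ℝ) (n k : ℕ) : ℝ :=
  n.choose k * ((k : ℝ) + 1) ^ (k - 1) * p ^ k

noncomputable def abelSum (p : ℝ) (n : ℕ) (w : ℝ) : ℝ :=
  ∑ k ∈ range (n + 1), abelWeight p n k * (w + ((n - k : ℕ) : ℝ) * p) ^ (n - k)

theorem succ_sub_mul_abelWeight (p : ℝ) (n k : ℕ) :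
    ((n + 1 - k : ℕ) : ℝ) * abelWeight p (n + 1) k = (n + 1) * abelWeight p n k := by
  have h : ((n.choose k * (n + 1) : ℕ) : ℝ) = ((n + 1).choose k * (n + 1 - k) : ℕ) :=
    congrArg _ (Nat.choose_mul_succ_eq n k)
  push_cast at h
  rw [abelWeight, abelWeight]
  linear_combination (-(((k : ℝ) + 1) ^ (k - 1) * p ^ k)) * h

theorem abelSum_succ_neg_eq_zero (p : ℝ) (n : ℕ) : abelSum p (n + 1) (-((n + 2) * p)) = 0 := by
  have hterm : ∀ k ∈ range (n + 2), abelWeight p (n + 1) k *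
      (-((n + 2) * p) + ((n + 1 - k : ℕ) : ℝ) * p) ^ (n + 1 - k) =
      p ^ (n + 1) * ((-1) ^ (n + 1 - k) * ((n + 1).choose k : ℝ) * (1 + k) ^ n) := by
    intro k hk
    have hk : k ≤ n + 1 := Nat.lt_succ_iff.mp (mem_range.mp hk)
    rw [abelWeight, Nat.cast_sub hk, show -((n + 2) * p) + ((n + 1 : ℕ) - (k : ℝ)) * p =
      -1 * ((1 + k) * p) by push_cast; ring]
    have hpow : ((1 + k : ℝ)) ^ (k - 1) * (1 + k) ^ (n + 1 - k) = (1 + k) ^ n := by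
      rcases Nat.eq_zero_or_pos k with rfl | hk0
      · simp
      · rw [← pow_add]; congr 1; omega
    have hp : p ^ k * p ^ (n + 1 - k) = p ^ (n + 1) := by
      rw [← pow_add, Nat.add_sub_cancel' hk]
    rw [mul_pow, mul_pow, ← hpow, ← hp, add_comm (k : ℝ) 1]
    ring
  rw [abelSum, sum_congr rfl hterm, ← mul_sum,
    sum_neg_one_pow_mul_choose_mul_pow_eq_zero (Nat.lt_succ_self n), mul_zero]

theorem hasDerivAt_abelSum (p w : ℝ) (n : ℕ) :
    HasDerivAt (abelSum p (n + 1)) ((n + 1) * abelSum p n (w + p)) w := by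
  have hterm : ∀ k ∈ range (n + 2), HasDerivAt
      (fun w ↦ abelWeight p (n + 1) k * (w + ((n + 1 - k : ℕ) : ℝ) * p) ^ (n + 1 - k))
      (abelWeight p (n + 1) k *
        (((n + 1 - k : ℕ) : ℝ) * (w + ((n + 1 - k : ℕ) : ℝ) * p) ^ (n + 1 - k - 1) * 1)) w :=
    fun k _ ↦ (((hasDerivAt_id' w).add_const _).fun_pow _).const_mul _
  refine (HasDerivAt.fun_sum hterm).congr_deriv ?_
  rw [sum_range_succ, Nat.sub_self, Nat.cast_zero, zero_mul, zero_mul, mul_zero, add_zero,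
    abelSum, mul_sum]
  refine sum_congr rfl fun k hk ↦ ?_
  have hk : k ≤ n := Nat.lt_succ_iff.mp (mem_range.mp hk)
  rw [mul_one, mul_left_comm, ← mul_assoc, succ_sub_mul_abelWeight, Nat.succ_sub hk,
    Nat.succ_sub_one]
  push_cast
  ring

theorem abelSum_eq (p w : ℝ) (n : ℕ) : abelSum p n w = (w + (n + 1) * p) ^ n := by
  induction n generalizing w with
  | zero => simp [abelSum, abelWeight]
  | succ n ih =>
    have hg : ∀ w, HasDerivAt (fun w ↦ abelSum p (n + 1) w - (w + (n + 2) * p) ^ (n + 1)) 0 w := by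
      intro w
      refine ((hasDerivAt_abelSum p w n).fun_sub
        (((hasDerivAt_id' w).add_const _).fun_pow (n + 1))).congr_deriv ?_
      rw [ih]
      push_cast
      ring
    have := is_const_of_deriv_eq_zero (fun w ↦ (hg w).differentiableAt) (fun w ↦ (hg w).deriv)
      w (-((n + 2) * p))
    simp only [abelSum_succ_neg_eq_zero, neg_add_cancel, zero_pow n.succ_ne_zero] at this
    push_cast
    linear_combination this

theorem sum_abelWeight_mul_one_sub_pow (p : ℝ) (n : ℕ) :
    ∑ k ∈ range (n + 1), abelWeight p n k * (1 - (k + 1) * p) ^ (n - k) = 1 := by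
  have h := abelSum_eq p (1 - (n + 1) * p) n
  rw [sub_add_cancel, one_pow, abelSum] at h
  refine Eq.trans (sum_congr rfl fun k hk ↦ ?_) h
  rw [Nat.cast_sub (Nat.lt_succ_iff.mp (mem_range.mp hk))]
  ring

theorem sum_abelWeight_mul_zpow {p : ℝ} (hp : 0 ≤ p) {n : ℕ} (hnp : (n + 1) * p < 1) :
    ∑ k ∈ range (n + 1), abelWeight p n k * (1 - (k + 1) * p) ^ ((n : ℤ) - k - 1) =
      (1 - n * p) / (1 - (n + 1) * p) := by
  set z : ℕ → ℝ := fun k ↦ abelWeight p n k * (1 - (k + 1) * p) ^ ((n : ℤ) - k - 1)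
  have hsplit : ∀ k ∈ range (n + 1), abelWeight p n k * (1 - (k + 1) * p) ^ (n - k) =
      (1 - (n + 1) * p) * z k + p * (((n - k : ℕ) : ℝ) * z k) := by
    intro k hk
    have hk : k ≤ n := Nat.lt_succ_iff.mp (mem_range.mp hk)
    have hpos : 0 < 1 - (k + 1) * p := by
      have : ((k : ℝ) + 1) * p ≤ (n + 1) * p :=
        mul_le_mul_of_nonneg_right (by exact_mod_cast Nat.succ_le_succ hk) hp
      linarith
    rw [← zpow_natCast, show (((n - k : ℕ)) : ℤ) = ((n : ℤ) - k - 1) + 1 by omega,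
      zpow_add_one₀ hpos.ne', Nat.cast_sub hk]
    ring
  have htail : ∑ k ∈ range (n + 1), ((n - k : ℕ) : ℝ) * z k = n := by
    cases n with
    | zero => simp
    | succ m =>
      rw [sum_range_succ, Nat.sub_self, Nat.cast_zero, zero_mul, add_zero]
      calc _ = ((m : ℝ) + 1) *
            ∑ k ∈ range (m + 1), abelWeight p m k * (1 - (k + 1) * p) ^ (m - k) := by
            rw [mul_sum]
            refine sum_congr rfl fun k hk ↦ ?_
            rw [← mul_assoc, succ_sub_mul_abelWeight, ← zpow_natCast,
              show (((m + 1 : ℕ) : ℤ) - k - 1) = ((m - k : ℕ) : ℤ) by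
                have := mem_range.mp hk; omega]
            ring
        _ = _ := by rw [sum_abelWeight_mul_one_sub_pow, mul_one, Nat.cast_succ]
  have h := sum_abelWeight_mul_one_sub_pow p n
  rw [sum_congr rfl hsplit, sum_add_distrib, ← mul_sum, ← mul_sum, htail] at h
  rw [eq_div_iff (by linarith)]
  linear_combination h

theorem abelianP_succ_succ (p : ℝ) (n k : ℕ) :
    abelianP (n + 1) p (k + 1) = (1 - (n + 1) * p) / (1 - n * p) *
      (abelWeight p n k * (1 - (k + 1) * p) ^ ((n : ℤ) - k - 1)) := by
  have hpow : ((k : ℝ) + 1) ^ ((k + 1 : ℕ) - 2 : ℤ) = ((k : ℝ) + 1) ^ (k - 1) := by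
    rcases Nat.eq_zero_or_pos k with rfl | hk
    · norm_num
    · rw [← zpow_natCast]; congr 1; omega
  have hexp : ((n + 1 : ℕ) : ℤ) - (k + 1 : ℕ) - 1 = (n : ℤ) - k - 1 := by omega
  rw [abelianP, abelWeight, Nat.add_sub_cancel, Nat.add_sub_cancel, hexp, Nat.cast_succ,
    Nat.cast_succ, hpow]
  ring

theorem abelian_is_distribution (N : ℕ) (hN : 0 < N) (p : ℝ)
    (hp : 0 < p) (hp' : p < 1 / N) :
    ∑ b ∈ Finset.Icc 1 N, abelianP N p b = 1 := by
  obtain ⟨n, rfl⟩ := Nat.exists_eq_add_one.mpr hN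
  have hnp : ((n : ℝ) + 1) * p < 1 := by
    rwa [lt_div_iff₀ (by positivity), Nat.cast_succ, mul_comm] at hp'
  have hreindex : ∑ b ∈ Icc 1 (n + 1), abelianP (n + 1) p b =
      ∑ k ∈ range (n + 1), abelianP (n + 1) p (k + 1) := by
    rw [range_eq_Ico, sum_Ico_add', ← Ico_add_one_right_eq_Icc]
  have hden : 0 < 1 - ((n : ℝ) + 1) * p := sub_pos.mpr hnp
  rw [hreindex]
  simp_rw [abelianP_succ_succ]
  rw [← mul_sum, sum_abelWeight_mul_zpow hp.le hnp,
    div_mul_div_cancel₀ (by linarith : 1 - (n : ℝ) * p ≠ 0), div_self hden.ne']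
end

section
/- For the Abelian distribution with parameters N and p = α/N where 0 < α < 1, the expected value E(Z_{N,α/N}) equals N/(N - (N-1)α). -/
open Finset Polynomial

section

variable {R : Type*} [CommRing R]

theorem Polynomial.alternating_sum_choose_mul_eval_eq_zero {P : R[X]} {m : ℕ}
    (hP : P.natDegree < m) :
    ∑ j ∈ range (m + 1), (-1 : R) ^ (m - j) * m.choose j * P.eval (j : R) = 0 := by
  have := congr_fun (fwdDiff_iter_eq_zero_of_degree_lt hP) 0
  rw [fwdDiff_iter_eq_sum_shift] at this
  simpa [zsmul_eq_mul] using this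

theorem alternating_sum_Icc_choose_mul_add_mul_pow (x z : R) {m : ℕ} (hm : 1 ≤ m) :
    ∑ j ∈ Icc 1 m, (-1 : R) ^ (m - j) * m.choose j * (x + j * z) ^ (m - 1)
      = -(-1) ^ m * x ^ (m - 1) := by
  have hdeg : ((C z * X + C x) ^ (m - 1)).natDegree < m :=
    calc _ ≤ (m - 1) * 1 := natDegree_pow_le.trans (Nat.mul_le_mul_left _ natDegree_linear_le)
      _ < m := by omega
  have h := alternating_sum_choose_mul_eval_eq_zero hdeg
  rw [sum_range_eq_add_Ico _ (by omega : 0 < m + 1), Ico_add_one_right_eq_Icc] at h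
  have hlin : ∀ r : R, eval r (C z * X + C x) = x + r * z := fun r => by
    simp only [eval_add, eval_mul, eval_C, eval_X]; ring
  simp only [eval_pow, hlin, Nat.sub_zero, Nat.choose_zero_right, Nat.cast_zero, Nat.cast_one,
    mul_one, zero_mul, add_zero] at h
  linear_combination h

theorem choose_mul_sub_pow_eq_sum_Icc (a b : R) {j n : ℕ} (hjn : j ≤ n) :
    n.choose j * (a - b) ^ (n - j)
      = ∑ m ∈ Icc j n, n.choose m * m.choose j * (-b) ^ (m - j) * a ^ (n - m) := by
  rw [sub_eq_neg_add, add_pow, mul_sum, ← Ico_add_one_right_eq_Icc, sum_Ico_eq_sum_range,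
    show n + 1 - j = n - j + 1 by omega]
  refine sum_congr rfl fun i hi => ?_
  have hi : i ≤ n - j := Nat.lt_succ_iff.mp (mem_range.mp hi)
  have hchoose := Nat.choose_mul (n := n) (k := j + i) (s := j) (by omega)
  rw [Nat.add_sub_cancel_left] at hchoose
  rw [Nat.add_sub_cancel_left, show n - (j + i) = n - j - i by omega]
  have := congrArg (Nat.cast (R := R)) hchoose
  push_cast at this
  linear_combination -(-b) ^ i * a ^ (n - j - i) * this

/-- The `k = 0` term `x * x⁻¹ * y ^ n` of Abel's sum is written as `y ^ n`. -/
theorem abel_identity (n : ℕ) (x y z : R) :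
    y ^ n + ∑ k ∈ Icc 1 n, n.choose k * x * (x + k * z) ^ (k - 1) * (y - k * z) ^ (n - k)
      = (x + y) ^ n := by
  have expand : ∀ k ∈ Icc 1 n,
      n.choose k * x * (x + k * z) ^ (k - 1) * (y - k * z) ^ (n - k)
        = ∑ m ∈ Icc k n, n.choose m * (x + y) ^ (n - m) * x *
            ((-1) ^ (m - k) * m.choose k * (x + k * z) ^ (m - 1)) := by
    intro k hk
    rw [mem_Icc] at hk
    calc _ = x * (x + k * z) ^ (k - 1) *
          (n.choose k * ((x + y) - (x + k * z)) ^ (n - k)) := by ring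
      _ = _ := by
        rw [choose_mul_sub_pow_eq_sum_Icc _ _ hk.2, mul_sum]
        refine sum_congr rfl fun m hm => ?_
        rw [mem_Icc] at hm
        rw [neg_pow, show m - 1 = (k - 1) + (m - k) by omega, pow_add]
        ring
  have inner : ∀ m ∈ Icc 1 n, ∑ k ∈ Icc 1 m, n.choose m * (x + y) ^ (n - m) * x *
        ((-1) ^ (m - k) * m.choose k * (x + k * z) ^ (m - 1))
      = -((-x) ^ m * (x + y) ^ (n - m) * n.choose m) := by
    intro m hm
    rw [mem_Icc] at hm
    rw [← mul_sum, alternating_sum_Icc_choose_mul_add_mul_pow x z hm.1, neg_pow,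
      show m = (m - 1) + 1 from (Nat.sub_add_cancel hm.1).symm]
    simp only [Nat.add_sub_cancel]
    ring
  have hy : y ^ n = (x + y) ^ n + ∑ m ∈ Icc 1 n, (-x) ^ m * (x + y) ^ (n - m) * n.choose m := by
    conv_lhs => rw [show y = -x + (x + y) by ring]
    rw [add_pow, sum_range_eq_add_Ico _ (by omega : 0 < n + 1), Ico_add_one_right_eq_Icc]
    simp only [pow_zero, one_mul, Nat.sub_zero, Nat.choose_zero_right, Nat.cast_one, mul_one]
  rw [sum_congr rfl expand, sum_comm' (t' := Icc 1 n) (s' := fun m => Icc 1 m)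
    (fun k m => by simp only [mem_Icc]; omega), sum_congr rfl inner, sum_neg_distrib, hy]
  ring

end

theorem mul_abelianP_eq (N : ℕ) (p : ℝ) {b : ℕ} (hb : 1 ≤ b) :
    b * abelianP N p b = (1 - (N - 1) * p)⁻¹ * ((1 - N * p) * (N - 1).choose (b - 1) *
      p ^ (b - 1) * (1 - b * p) ^ ((N : ℤ) - b - 1) * (b : ℝ) ^ (b - 1)) := by
  have hb0 : (b : ℝ) ≠ 0 := by positivity
  rw [abelianP, show (b : ℤ) - 2 = ((b - 1 : ℕ) : ℤ) - 1 by omega, zpow_sub_one₀ hb0,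
    zpow_natCast]
  field_simp

theorem sum_Icc_abelian_size_bias_eq_one (M : ℕ) (p : ℝ) (hp : 1 - (M + 1) * p ≠ 0) :
    ∑ b ∈ Icc 1 (M + 1), (1 - (M + 1) * p) * M.choose (b - 1) * p ^ (b - 1) *
      (1 - b * p) ^ ((M : ℤ) - b) * (b : ℝ) ^ (b - 1) = 1 := by
  have top : (1 - (M + 1) * p) * M.choose (M + 1 - 1) * p ^ (M + 1 - 1) *
      (1 - ((M + 1 : ℕ) : ℝ) * p) ^ ((M : ℤ) - (M + 1 : ℕ)) * ((M + 1 : ℕ) : ℝ) ^ (M + 1 - 1)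
        = ((M + 1) * p) ^ M := by
    rw [Nat.add_sub_cancel, Nat.choose_self, show (M : ℤ) - (M + 1 : ℕ) = -1 by push_cast; ring,
      zpow_neg_one, mul_pow]
    push_cast
    field_simp
  have reflect : ∑ b ∈ Icc 1 M, (1 - (M + 1) * p) * M.choose (b - 1) * p ^ (b - 1) *
      (1 - b * p) ^ ((M : ℤ) - b) * (b : ℝ) ^ (b - 1)
        = ∑ k ∈ Icc 1 M, M.choose k * (1 - (M + 1) * p) * ((1 - (M + 1) * p) + k * p) ^ (k - 1) *
          ((M + 1) * p - k * p) ^ (M - k) := by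
    refine sum_nbij' (fun b => M + 1 - b) (fun k => M + 1 - k)
      (fun b hb => by rw [mem_Icc] at hb ⊢; omega) (fun k hk => by rw [mem_Icc] at hk ⊢; omega)
      (fun b hb => by rw [mem_Icc] at hb; omega) (fun k hk => by rw [mem_Icc] at hk; omega)
      fun b hb => ?_
    rw [mem_Icc] at hb
    rw [Nat.choose_symm_of_eq_add (show M = (M + 1 - b) + (b - 1) by omega),
      show M + 1 - b - 1 = M - b by omega, show M - (M + 1 - b) = b - 1 by omega,
      show (M : ℤ) - b = ((M - b : ℕ) : ℤ) by omega, zpow_natCast,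
      Nat.cast_sub (by omega : b ≤ M + 1),
      show 1 - (M + 1) * p + ((M + 1 : ℕ) - b : ℝ) * p = 1 - b * p by push_cast; ring,
      show (M + 1) * p - ((M + 1 : ℕ) - b : ℝ) * p = b * p by push_cast; ring, mul_pow]
    ring
  have abel := abel_identity M (1 - (M + 1) * p) ((M + 1) * p) p
  rw [sub_add_cancel, one_pow] at abel
  rw [sum_Icc_succ_top (by omega), top, reflect]
  linear_combination abel

theorem sum_mul_abelianP_eq_inv (M : ℕ) (p : ℝ) (hp : 1 - (M + 1) * p ≠ 0) :
    ∑ b ∈ Icc 1 (M + 1), b * abelianP (M + 1) p b = (1 - M * p)⁻¹ := by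
  have hexp : ∀ b : ℕ, (M : ℤ) + 1 - b - 1 = M - b := fun b => by ring
  rw [sum_congr rfl fun b hb => mul_abelianP_eq (M + 1) p (mem_Icc.mp hb).1, ← mul_sum]
  simp only [Nat.cast_add, Nat.cast_one, hexp, Nat.add_sub_cancel, add_sub_cancel_right]
  rw [sum_Icc_abelian_size_bias_eq_one M p hp, mul_one]

theorem abelian_mean_general (N : ℕ) (α : ℝ) (hα' : α < 1) :
    ∑ b ∈ Finset.Icc 1 N, (b : ℝ) * abelianP N (α / N) b
      = N / (N - (N - 1) * α) := by
  rcases N with _ | M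
  · simp
  have hN : ((M + 1 : ℕ) : ℝ) ≠ 0 := by positivity
  have hNp : 1 - (M + 1) * (α / (M + 1 : ℕ)) ≠ 0 := by
    rw [← Nat.cast_add_one, mul_div_cancel₀ _ hN]
    linarith
  rw [sum_mul_abelianP_eq_inv M _ hNp]
  field_simp
  push_cast
  ring

theorem abelian_mean (N : ℕ) (hN : 0 < N) (α : ℝ) (hα : 0 < α) (hα' : α < 1) :
    ∑ b ∈ Finset.Icc 1 N, (b : ℝ) * abelianP N (α / N) b
      = N / (N - (N - 1) * α) :=
  abelian_mean_general N α hα'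
end

section
/- For positive integers i and N with N - 3 ≥ i ≥ √(2N), one has h_i(N) > 0 and 2N^{i+3} > P_i(N) > (N-1)(N-2)···(N-(i+2)) ≥ 0, where P_i(x) = Σ_{j=0}^{i} s(i+2,j;1) x^j and h_i(x) = x^{i+1}((i+2)(i+3)/2 - x). -/
/-!
The polynomial `(x-1)(x-2)⋯(x-m)` is monic with `x^(m-1)`-coefficient `-m(m+1)/2`, so `P_i` is
this product for `m = i + 2` with its two leading terms removed:
`P_i(N) = (N-1)⋯(N-(i+2)) + h_i(N)`. For `N ≥ i + 3` the product lies in `[0, N^(i+2)]`, and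
`2N ≤ i² < (i+2)(i+3)` makes `h_i(N)` positive. Hence `P_i(N)` exceeds the product and is at most
`N^(i+1) (i+2)(i+3)/2 < 2N^(i+3)`.
-/

/-- The non-centered Stirling numbers of the first kind `s(m,j;1)`, defined
by `(x-1)(x-2)⋯(x-m) = Σ_{j=0}^{m} s(m,j;1) x^j`. -/
noncomputable def stirling1 (m j : ℕ) : ℤ :=
  (∏ k ∈ Finset.range m, (Polynomial.X - Polynomial.C ((k : ℤ) + 1))).coeff j

open Finset Polynomial

lemma natDegree_prod_X_sub_C_succ (m : ℕ) :
    (∏ k ∈ range m, (X - C ((k : ℤ) + 1))).natDegree = m := by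
  rw [natDegree_finsetProd_X_sub_C_eq_card, card_range]

lemma stirling1_self (m : ℕ) : stirling1 m m = 1 := by
  have := (monic_prod_of_monic (range m) _ fun k _ => monic_X_sub_C ((k : ℤ) + 1)).coeff_natDegree
  rwa [natDegree_prod_X_sub_C_succ] at this

lemma sum_range_add_one_mul_two (m : ℕ) :
    ∑ k ∈ range m, ((k : ℤ) + 1) * 2 = m * (m + 1) := by
  induction m with
  | zero => simp
  | succ m ih => rw [sum_range_succ, ih]; push_cast; ring

lemma two_mul_stirling1_succ_self (m : ℕ) :
    2 * stirling1 (m + 1) m = -((m + 1) * (m + 2)) := by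
  have hcoeff := prod_X_sub_C_coeff_card_pred (range (m + 1)) (fun k => (k : ℤ) + 1) (by simp)
  rw [card_range, add_tsub_cancel_right] at hcoeff
  rw [stirling1, hcoeff, mul_neg, mul_comm, sum_mul, sum_range_add_one_mul_two]
  push_cast
  ring

lemma prod_sub_succ_eq_sum_stirling1 {R : Type*} [CommRing R] (m : ℕ) (x : R) :
    ∏ k ∈ range m, (x - ((k : R) + 1)) = ∑ j ∈ range (m + 1), (stirling1 m j : R) * x ^ j := by
  have hdeg :
      ((∏ k ∈ range m, (X - C ((k : ℤ) + 1))).map (Int.castRingHom R)).natDegree < m + 1 :=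
    natDegree_map_le.trans_lt (by rw [natDegree_prod_X_sub_C_succ]; omega)
  have heval : ((∏ k ∈ range m, (X - C ((k : ℤ) + 1))).map (Int.castRingHom R)).eval x
      = ∏ k ∈ range m, (x - ((k : R) + 1)) := by
    simp [Polynomial.map_prod, eval_prod]
  rw [← heval, eval_eq_sum_range' hdeg]
  simp only [coeff_map, eq_intCast, stirling1]

lemma prod_sub_succ_eq_sum_stirling1_add {R : Type*} [CommRing R] (m : ℕ) (x : R) :
    ∏ k ∈ range (m + 2), (x - ((k : R) + 1))
      = ∑ j ∈ range (m + 1), (stirling1 (m + 2) j : R) * x ^ j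
        + stirling1 (m + 2) (m + 1) * x ^ (m + 1) + x ^ (m + 2) := by
  rw [prod_sub_succ_eq_sum_stirling1, sum_range_succ _ (m + 2), sum_range_succ _ (m + 1),
    stirling1_self, Int.cast_one, one_mul]

lemma sum_stirling1_eq_prod_add {K : Type*} [Field K] [CharZero K] (m : ℕ) (x : K) :
    ∑ j ∈ range (m + 1), (stirling1 (m + 2) j : K) * x ^ j
      = ∏ k ∈ range (m + 2), (x - ((k : K) + 1))
        + x ^ (m + 1) * (((m : K) + 2) * ((m : K) + 3) / 2 - x) := by
  have htwo : 2 * (stirling1 (m + 2) (m + 1) : K) = -(((m : K) + 2) * ((m : K) + 3)) := by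
    exact_mod_cast two_mul_stirling1_succ_self (m + 1)
  rw [prod_sub_succ_eq_sum_stirling1_add]
  linear_combination (-x ^ (m + 1) / 2) * htwo

section Ordered

variable {R : Type*} [CommRing R] [LinearOrder R] [IsStrictOrderedRing R] {m : ℕ} {x : R}

lemma prod_sub_succ_nonneg (hx : (m : R) ≤ x) : 0 ≤ ∏ k ∈ range m, (x - ((k : R) + 1)) :=
  prod_nonneg fun k hk => by
    have : (k : R) + 1 ≤ m := by exact_mod_cast mem_range.mp hk
    linarith

lemma prod_sub_succ_le_pow (hx : (m : R) ≤ x) : ∏ k ∈ range m, (x - ((k : R) + 1)) ≤ x ^ m :=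
  calc ∏ k ∈ range m, (x - ((k : R) + 1))
      ≤ ∏ _k ∈ range m, x := prod_le_prod (fun k hk => by
          have : (k : R) + 1 ≤ m := by exact_mod_cast mem_range.mp hk
          linarith) fun k _ => by linarith [(k.cast_nonneg : (0 : R) ≤ k)]
    _ = x ^ m := by rw [prod_const, card_range]

end Ordered

theorem P_bounds_general (i N : ℕ) (hupper : i ≤ N - 3) (hN' : 3 ≤ N)
    (hlower : Real.sqrt (2 * N) ≤ i) :
    (N : ℝ) ^ (i + 1) * (((i : ℝ) + 2) * ((i : ℝ) + 3) / 2 - N) > 0 ∧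
      2 * (N : ℝ) ^ (i + 3)
        > ∑ j ∈ Finset.range (i + 1), (stirling1 (i + 2) j : ℝ) * (N : ℝ) ^ j ∧
      (∑ j ∈ Finset.range (i + 1), (stirling1 (i + 2) j : ℝ) * (N : ℝ) ^ j)
        > ∏ k ∈ Finset.range (i + 2), ((N : ℝ) - (k + 1)) ∧
      (∏ k ∈ Finset.range (i + 2), ((N : ℝ) - (k + 1))) ≥ 0 := by
  have hiN : (i : ℝ) + 3 ≤ N := by exact_mod_cast (by omega : i + 3 ≤ N)
  have hNge : ((i + 2 : ℕ) : ℝ) ≤ N := by push_cast; linarith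
  have h2N : 2 * (N : ℝ) ≤ (i : ℝ) ^ 2 := (Real.sqrt_le_iff.mp hlower).2
  have hNc : (N : ℝ) < ((i : ℝ) + 2) * ((i : ℝ) + 3) / 2 := by nlinarith
  have hc : ((i : ℝ) + 2) * ((i : ℝ) + 3) / 2 < 2 * (N : ℝ) ^ 2 := by nlinarith
  rw [sum_stirling1_eq_prod_add]
  set c : ℝ := ((i : ℝ) + 2) * ((i : ℝ) + 3) / 2
  have hh : (N : ℝ) ^ (i + 1) * (c - N) > 0 := mul_pos (by positivity) (by linarith)
  refine ⟨hh, ?_, by linarith, prod_sub_succ_nonneg hNge⟩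
  calc _ ≤ (N : ℝ) ^ (i + 2) + (N : ℝ) ^ (i + 1) * (c - N) := by
          gcongr; exact prod_sub_succ_le_pow hNge
    _ = (N : ℝ) ^ (i + 1) * c := by ring
    _ < (N : ℝ) ^ (i + 1) * (2 * (N : ℝ) ^ 2) := by gcongr
    _ = 2 * (N : ℝ) ^ (i + 3) := by ring

theorem P_bounds (i N : ℕ) (hi : 0 < i) (hupper : i ≤ N - 3) (hN' : 3 ≤ N)
    (hlower : Real.sqrt (2 * N) ≤ i) :
    (N : ℝ) ^ (i + 1) * (((i : ℝ) + 2) * ((i : ℝ) + 3) / 2 - N) > 0 ∧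
      2 * (N : ℝ) ^ (i + 3)
        > ∑ j ∈ Finset.range (i + 1), (stirling1 (i + 2) j : ℝ) * (N : ℝ) ^ j ∧
      (∑ j ∈ Finset.range (i + 1), (stirling1 (i + 2) j : ℝ) * (N : ℝ) ^ j)
        > ∏ k ∈ Finset.range (i + 2), ((N : ℝ) - (k + 1)) ∧
      (∏ k ∈ Finset.range (i + 2), ((N : ℝ) - (k + 1))) ≥ 0 :=
  P_bounds_general i N hupper hN' hlower
end

section
/- Let f(x) = (x+1)(x+2) + 2x(x+1)(x+2) + x(x-1)(x+1)(x+2) + 4. Then for all integers i ≥ j ≥ 0, f(i) ≥ 0 and |s(i+2,j;1)| ≤ f(i) * |s(i,j;1)|. -/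
/-- `f(x) = (x+1)(x+2) + 2x(x+1)(x+2) + x(x-1)(x+1)(x+2) + 4`. -/
def fBound (x : ℤ) : ℤ :=
  (x + 1) * (x + 2) + 2 * x * (x + 1) * (x + 2) + x * (x - 1) * (x + 1) * (x + 2) + 4

open Nat Polynomial

theorem stirling1_zero_left (j : ℕ) : stirling1 0 j = if j = 0 then 1 else 0 := by
  simp [stirling1, coeff_one]

theorem stirling1_succ_zero (m : ℕ) : stirling1 (m + 1) 0 = -((m + 1) * stirling1 m 0) := by
  simp only [stirling1, Finset.prod_range_succ, mul_coeff_zero, coeff_sub, coeff_X_zero,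
    coeff_C_zero]
  ring

theorem stirling1_succ_succ (m j : ℕ) :
    stirling1 (m + 1) (j + 1) = stirling1 m j - (m + 1) * stirling1 m (j + 1) := by
  rw [stirling1, Finset.prod_range_succ, coeff_mul_X_sub_C, mul_comm]
  rfl

theorem stirling1_eq_neg_one_pow_mul_stirlingFirst (m j : ℕ) :
    stirling1 m j = (-1) ^ (m + j) * stirlingFirst (m + 1) (j + 1) := by
  induction m generalizing j with
  | zero => cases j <;> simp [stirling1_zero_left, stirlingFirst_succ_succ]
  | succ m ih =>
    cases j with
    | zero =>
      rw [stirling1_succ_zero, ih, stirlingFirst_succ_succ (m + 1), stirlingFirst_succ_zero]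
      push_cast
      ring
    | succ j =>
      rw [stirling1_succ_succ, ih, ih, stirlingFirst_succ_succ (m + 1) (j + 1)]
      push_cast
      ring

theorem abs_stirling1 (m j : ℕ) : |stirling1 m j| = stirlingFirst (m + 1) (j + 1) := by
  simp [stirling1_eq_neg_one_pow_mul_stirlingFirst, abs_mul]

theorem Nat.stirlingFirst_le_succ_succ (n k : ℕ) :
    stirlingFirst n k ≤ stirlingFirst (n + 1) (k + 1) :=
  stirlingFirst_succ_succ n k ▸ Nat.le_add_left _ _

theorem Nat.two_mul_stirlingFirst_le {n k : ℕ} (hk : k ≤ n) :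
    2 * stirlingFirst (n + 1) k ≤ n * (n + 1) * stirlingFirst (n + 1) (k + 1) := by
  induction n generalizing k with
  | zero => simp [Nat.le_zero.mp hk]
  | succ n ih =>
    cases k with
    | zero => simp
    | succ k =>
      have hprev := ih (Nat.le_of_succ_le_succ hk)
      calc 2 * stirlingFirst (n + 2) (k + 1)
          = 2 * (n + 1) * stirlingFirst (n + 1) (k + 1) + 2 * stirlingFirst (n + 1) k := by
            rw [stirlingFirst_succ_succ]; ring
        _ ≤ (n + 1) * (n + 2) * stirlingFirst (n + 1) (k + 1) := by nlinarith
        _ ≤ (n + 1) * (n + 2) * stirlingFirst (n + 2) (k + 2) :=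
            Nat.mul_le_mul_left _ (stirlingFirst_le_succ_succ _ _)

theorem Nat.two_mul_stirlingFirst_succ_le {n k : ℕ} (hk : k ≤ n) :
    2 * stirlingFirst (n + 2) (k + 1) ≤ (n + 1) * (n + 2) * stirlingFirst (n + 1) (k + 1) := by
  have hkey := two_mul_stirlingFirst_le hk
  rw [stirlingFirst_succ_succ]
  nlinarith

theorem Nat.stirlingFirst_add_three_le {n k : ℕ} (hk : k ≤ n) :
    stirlingFirst (n + 3) (k + 1) ≤
      ((n + 1) * (n + 2) * (n ^ 2 + n + 1) + 4) * stirlingFirst (n + 1) (k + 1) := by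
  have h₁ := two_mul_stirlingFirst_succ_le (n := n + 1) (k.le_succ_of_le hk)
  have h₂ := two_mul_stirlingFirst_succ_le hk
  have hpoly :
      (n + 1) * (n + 2) ^ 2 * (n + 3) ≤ 4 * ((n + 1) * (n + 2) * (n ^ 2 + n + 1) + 4) := by
    rcases n with _ | m
    · norm_num
    · ring_nf
      nlinarith [Nat.zero_le (m ^ 4), Nat.zero_le (m ^ 3), Nat.zero_le (m ^ 2)]
  nlinarith

theorem fBound_natCast (n : ℕ) : fBound n = ((n + 1) * (n + 2) * (n ^ 2 + n + 1) + 4 : ℕ) := by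
  simp only [fBound]
  push_cast
  ring

theorem abs_stirling1_step_bound (i j : ℕ) (hij : j ≤ i) :
    0 ≤ fBound (i : ℤ) ∧
      |stirling1 (i + 2) j| ≤ fBound (i : ℤ) * |stirling1 i j| := by
  rw [fBound_natCast, abs_stirling1, abs_stirling1]
  exact ⟨Int.natCast_nonneg _, mod_cast stirlingFirst_add_three_le hij⟩
end

section
/- For integers i ≥ j ≥ 1: Σ over (j-1)-element subsets {r_1,...,r_{j-1}} of {1,...,i} of 1/((i+1) r_1 ··· r_{j-1}) ≤ i * Σ over j-element subsets {r_1,...,r_j} of {1,...,i} of 1/(r_1 ··· r_j). -/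
theorem sum_subsets_bound (i j : ℕ) (hj : 0 < j) (hij : j ≤ i) :
    (∑ T ∈ (Finset.Icc 1 i).powersetCard (j - 1),
        (((i : ℝ) + 1) * ∏ r ∈ T, (r : ℝ))⁻¹)
      ≤ (i : ℝ) *
        ∑ T ∈ (Finset.Icc 1 i).powersetCard j, (∏ r ∈ T, (r : ℝ))⁻¹ := by
  set s := Finset.Icc 1 i with hs
  have hscard : s.card = i := by simp [hs]
  have hi0 : 0 < i := lt_of_lt_of_le hj hij
  -- key combinatorial identity
  have keyA :
      ∑ T ∈ s.powersetCard (j-1), ∑ x ∈ s \ T, ((x:ℝ) * ∏ r ∈ T, (r : ℝ))⁻¹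
      = ∑ S ∈ s.powersetCard j, ∑ x ∈ S, (∏ r ∈ S, (r : ℝ))⁻¹ := by
    rw [Finset.sum_sigma', Finset.sum_sigma']
    refine Finset.sum_nbij' (i := fun p => (⟨insert p.2 p.1, p.2⟩ : Σ _ : Finset ℕ, ℕ))
      (j := fun p => (⟨p.1.erase p.2, p.2⟩ : Σ _ : Finset ℕ, ℕ)) ?_ ?_ ?_ ?_ ?_
    · rintro ⟨T, x⟩ hp
      simp only [Finset.mem_sigma, Finset.mem_powersetCard, Finset.mem_sdiff] at hp ⊢
      obtain ⟨⟨hTs, hTc⟩, hxs, hxT⟩ := hp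
      refine ⟨⟨Finset.insert_subset hxs hTs, ?_⟩, Finset.mem_insert_self _ _⟩
      rw [Finset.card_insert_of_notMem hxT, hTc, Nat.sub_add_cancel hj]
    · rintro ⟨S, x⟩ hp
      simp only [Finset.mem_sigma, Finset.mem_powersetCard, Finset.mem_sdiff] at hp ⊢
      obtain ⟨⟨hSs, hSc⟩, hxS⟩ := hp
      refine ⟨⟨(Finset.erase_subset _ _).trans hSs, ?_⟩, hSs hxS, Finset.notMem_erase _ _⟩
      rw [Finset.card_erase_of_mem hxS, hSc]
    · rintro ⟨T, x⟩ hp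
      simp only [Finset.mem_sigma, Finset.mem_powersetCard, Finset.mem_sdiff] at hp
      simp [Finset.erase_insert hp.2.2]
    · rintro ⟨S, x⟩ hp
      simp only [Finset.mem_sigma, Finset.mem_powersetCard, Finset.mem_sdiff] at hp
      simp [Finset.insert_erase hp.2]
    · rintro ⟨T, x⟩ hp
      simp only [Finset.mem_sigma, Finset.mem_powersetCard, Finset.mem_sdiff] at hp
      rw [Finset.prod_insert hp.2.2]
  have keyA' :
      ∑ S ∈ s.powersetCard j, ∑ x ∈ S, (∏ r ∈ S, (r : ℝ))⁻¹
      = (j : ℝ) * ∑ S ∈ s.powersetCard j, (∏ r ∈ S, (r : ℝ))⁻¹ := by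
    rw [Finset.mul_sum]
    refine Finset.sum_congr rfl fun S hS => ?_
    rw [Finset.mem_powersetCard] at hS
    rw [Finset.sum_const, hS.2, nsmul_eq_mul]
  have hj0 : (j : ℝ) ≠ 0 := Nat.cast_ne_zero.mpr hj.ne'
  -- pointwise bound
  have hb : ∀ T ∈ s.powersetCard (j-1),
      (((i : ℝ) + 1) * ∏ r ∈ T, (r : ℝ))⁻¹
      ≤ ((i : ℝ) / j) * ∑ x ∈ s \ T, ((x:ℝ) * ∏ r ∈ T, (r : ℝ))⁻¹ := by
    intro T hT
    rw [Finset.mem_powersetCard] at hT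
    have hPpos : (0 : ℝ) < ∏ r ∈ T, (r : ℝ) := by
      apply Finset.prod_pos
      intro r hr
      have := hT.1 hr
      rw [hs, Finset.mem_Icc] at this
      exact_mod_cast lt_of_lt_of_le Nat.one_pos this.1
    have hcard : (s \ T).card = i - (j - 1) := by
      rw [Finset.card_sdiff_of_subset hT.1, hscard, hT.2]
    have hterm : ∀ x ∈ s \ T,
        ((i : ℝ) * ∏ r ∈ T, (r : ℝ))⁻¹ ≤ ((x:ℝ) * ∏ r ∈ T, (r : ℝ))⁻¹ := by
      intro x hx
      rw [Finset.mem_sdiff, hs, Finset.mem_Icc] at hx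
      have hx1 : 1 ≤ x := hx.1.1
      have hxi : x ≤ i := hx.1.2
      apply inv_anti₀
      · positivity
      · exact mul_le_mul_of_nonneg_right (by exact_mod_cast hxi) hPpos.le
    have hsum : ((i - (j-1) : ℕ) : ℝ) * ((i : ℝ) * ∏ r ∈ T, (r : ℝ))⁻¹
        ≤ ∑ x ∈ s \ T, ((x:ℝ) * ∏ r ∈ T, (r : ℝ))⁻¹ := by
      calc ((i - (j-1) : ℕ) : ℝ) * ((i : ℝ) * ∏ r ∈ T, (r : ℝ))⁻¹
          = ∑ _x ∈ s \ T, ((i : ℝ) * ∏ r ∈ T, (r : ℝ))⁻¹ := by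
            rw [Finset.sum_const, hcard, nsmul_eq_mul]
        _ ≤ _ := Finset.sum_le_sum hterm
    have hcast : ((i - (j-1) : ℕ) : ℝ) = (i : ℝ) - (j : ℝ) + 1 := by
      have h1 : j - 1 ≤ i := le_trans (Nat.sub_le _ _) hij
      rw [Nat.cast_sub h1, Nat.cast_sub hj]
      push_cast
      ring
    refine le_trans ?_ (mul_le_mul_of_nonneg_left hsum (by positivity))
    rw [hcast]
    have hineq : (j : ℝ) ≤ ((i : ℝ) - j + 1) * ((i : ℝ) + 1) := by
      have hji : (j : ℝ) ≤ i := by exact_mod_cast hij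
      nlinarith
    have hi' : (0 : ℝ) < i := by exact_mod_cast hi0
    have hj' : (0 : ℝ) < j := by exact_mod_cast hj
    rw [mul_inv, mul_inv, div_mul_eq_mul_div, le_div_iff₀ hj']
    have h1 : (i:ℝ) * (((i:ℝ) - j + 1) * (((i:ℝ))⁻¹ * (∏ r ∈ T, (r : ℝ))⁻¹))
        = ((i:ℝ) - j + 1) * (∏ r ∈ T, (r : ℝ))⁻¹ := by
      field_simp
    rw [h1]
    have h2 : ((i:ℝ)+1)⁻¹ * (∏ r ∈ T, (r : ℝ))⁻¹ * j
        ≤ ((i:ℝ)+1)⁻¹ * (∏ r ∈ T, (r : ℝ))⁻¹ * (((i:ℝ)-j+1)*((i:ℝ)+1)) :=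
      mul_le_mul_of_nonneg_left hineq (by positivity)
    have h3 : ((i:ℝ)+1)⁻¹ * (∏ r ∈ T, (r : ℝ))⁻¹ * (((i:ℝ)-j+1)*((i:ℝ)+1))
        = ((i:ℝ)-j+1) * (∏ r ∈ T, (r : ℝ))⁻¹ := by
      field_simp
    linarith
  calc ∑ T ∈ s.powersetCard (j-1), (((i : ℝ) + 1) * ∏ r ∈ T, (r : ℝ))⁻¹
      ≤ ∑ T ∈ s.powersetCard (j-1),
          ((i : ℝ) / j) * ∑ x ∈ s \ T, ((x:ℝ) * ∏ r ∈ T, (r : ℝ))⁻¹ :=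
        Finset.sum_le_sum hb
    _ = ((i : ℝ) / j) * ∑ T ∈ s.powersetCard (j-1),
          ∑ x ∈ s \ T, ((x:ℝ) * ∏ r ∈ T, (r : ℝ))⁻¹ := by rw [Finset.mul_sum]
    _ = ((i : ℝ) / j) * ((j:ℝ) * ∑ S ∈ s.powersetCard j, (∏ r ∈ S, (r : ℝ))⁻¹) := by
        rw [keyA, keyA']
    _ = (i : ℝ) * ∑ S ∈ s.powersetCard j, (∏ r ∈ S, (r : ℝ))⁻¹ := by
        field_simp
end

section
/- In the recursive avalanche construction with i.i.d. uniform [0,1] random variables U_1,...,U_N and 0 < p < 1/N, the expected value of the k-th generation size satisfies E(ε_{k,N}) = (N!/(N-k)!) * p^k for all 1 ≤ k ≤ N. -/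
/-!
Write `S_k = ε₀ + ⋯ + ε_{k-1}`; generation `k + 1` consists of the points in
`I_k = [1 - p S_{k+1}, 1 - p S_k]`, an interval of length `p ε_k`. Almost surely no point is one of
the possible endpoints `1 - p c` (`c ∈ ℕ`), and then each point lies in at most one `I_k`, so
`S_k ≤ N + 1`. A point `U_j` influences the intervals only once it has been absorbed, so
`U_j ∈ I_k` for the full system iff `U_j ∈ I_k` for the system of the other `N - 1` points. For
that system every `I_k` lies in `[0, 1]` (as `S_k ≤ N ≤ 1 / p`), so by Fubini
`P(U_j ∈ I_k) = E |I_k| = p E ε_k(N - 1)`. Summing over `j` gives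
`E ε_{k+1}(N) = N p E ε_k(N - 1)`, which unwinds to `N (N - 1) ⋯ (N - k + 1) p^k`.
-/

open MeasureTheory ProbabilityTheory Set

lemma measurable_indicator_Icc {α : Type*} [MeasurableSpace α] {f g h : α → ℝ}
    (hf : Measurable f) (hg : Measurable g) (hh : Measurable h) :
    Measurable fun a => (Icc (f a) (g a)).indicator (fun _ => (1 : ℝ)) (h a) := by
  have hs : MeasurableSet {a | h a ∈ Icc (f a) (g a)} :=
    (measurableSet_le hf hh).inter (measurableSet_le hh hg)
  exact (measurable_const.indicator hs : Measurable ({a | h a ∈ Icc (f a) (g a)}.indicator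
    fun _ => (1 : ℝ)))

lemma MeasureTheory.integral_pi_eq_integral_integral_insertNth {α : Type*} [MeasurableSpace α]
    {E : Type*} [NormedAddCommGroup E] [NormedSpace ℝ E] {n : ℕ} (μ : Measure α) [SigmaFinite μ]
    (j : Fin (n + 1)) {f : (Fin (n + 1) → α) → E}
    (hf : Integrable f (Measure.pi fun _ => μ)) :
    ∫ v, f v ∂(Measure.pi fun _ => μ) =
      ∫ y, ∫ x, f (j.insertNth x y) ∂μ ∂(Measure.pi fun _ => μ) := by
  have he := (measurePreserving_piFinSuccAbove (fun _ => μ) j).symm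
  rw [← he.integral_comp' f]
  exact integral_prod_symm (f ∘ _)
    ((he.integrable_comp_emb (MeasurableEquiv.measurableEmbedding _)).2 hf)

namespace Avalanche

variable (p : ℝ) {n : ℕ}

/-- The paper's `ε_{0,n} + ⋯ + ε_{k-1,n}` when `U = v`. -/
noncomputable def cumSize (v : Fin n → ℝ) : ℕ → ℝ
  | 0 => 0
  | 1 => 1
  | k + 2 => cumSize v (k + 1) +
      ∑ j, (Icc (1 - p * cumSize v (k + 1)) (1 - p * cumSize v k)).indicator
        (fun _ => (1 : ℝ)) (v j)

/-- `genInterval p v k` is the paper's interval `I_{k+1}`: its points form generation `k + 1`. -/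
def genInterval (v : Fin n → ℝ) (k : ℕ) : Set ℝ :=
  Icc (1 - p * cumSize p v (k + 1)) (1 - p * cumSize p v k)

def endpoints : Set ℝ := range fun c : ℕ => 1 - p * c

@[simp] lemma cumSize_zero (v : Fin n → ℝ) : cumSize p v 0 = 0 := rfl

@[simp] lemma cumSize_one (v : Fin n → ℝ) : cumSize p v 1 = 1 := rfl

lemma cumSize_add_two (v : Fin n → ℝ) (k : ℕ) :
    cumSize p v (k + 2) =
      cumSize p v (k + 1) + ∑ j, (genInterval p v k).indicator (fun _ => (1 : ℝ)) (v j) :=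
  rfl

lemma cumSize_mono (v : Fin n → ℝ) : Monotone (cumSize p v) := by
  refine monotone_nat_of_le_succ fun k => ?_
  rcases k with _ | k
  · simp
  · rw [cumSize_add_two]
    exact le_add_of_nonneg_right
      (Finset.sum_nonneg fun j _ => indicator_nonneg (fun _ _ => zero_le_one) _)

lemma cumSize_nonneg (v : Fin n → ℝ) (k : ℕ) : 0 ≤ cumSize p v k := by
  simpa using cumSize_mono p v k.zero_le

lemma one_sub_mul_cumSize_mem_endpoints (v : Fin n → ℝ) (k : ℕ) :
    1 - p * cumSize p v k ∈ endpoints p := by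
  suffices ∃ c : ℕ, cumSize p v k = c by
    obtain ⟨c, hc⟩ := this
    exact ⟨c, by rw [hc]⟩
  induction k using Nat.strong_induction_on with
  | _ k ih =>
    match k with
    | 0 => exact ⟨0, by simp⟩
    | 1 => exact ⟨1, by simp⟩
    | k + 2 =>
      obtain ⟨c, hc⟩ := ih (k + 1) (by omega)
      classical
      refine ⟨c + (Finset.univ.filter fun j => v j ∈ genInterval p v k).card, ?_⟩
      simp only [cumSize_add_two, hc, indicator_apply, Finset.sum_boole, Nat.cast_add]

lemma eq_of_mem_genInterval (hp : 0 ≤ p) {v : Fin n → ℝ} {x : ℝ} (hx : x ∉ endpoints p)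
    {a b : ℕ} (ha : x ∈ genInterval p v a) (hb : x ∈ genInterval p v b) : a = b := by
  wlog hab : a < b generalizing a b
  · rcases (not_lt.1 hab).eq_or_lt with h | h
    exacts [h.symm, (this hb ha h).symm]
  have hmono : cumSize p v (a + 1) ≤ cumSize p v b := cumSize_mono p v hab
  have hxa : x = 1 - p * cumSize p v (a + 1) :=
    le_antisymm (hb.2.trans (by nlinarith)) ha.1
  exact absurd (hxa ▸ one_sub_mul_cumSize_mem_endpoints p v (a + 1)) hx

lemma sum_indicator_genInterval_le_one (hp : 0 ≤ p) (v : Fin n → ℝ) {x : ℝ}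
    (hx : x ∉ endpoints p) (k : ℕ) :
    ∑ m ∈ Finset.range k, (genInterval p v m).indicator (fun _ => (1 : ℝ)) x ≤ 1 := by
  classical
  simp only [indicator_apply, Finset.sum_boole]
  exact_mod_cast Finset.card_le_one.2 fun a ha b hb =>
    eq_of_mem_genInterval p hp hx (Finset.mem_filter.1 ha).2 (Finset.mem_filter.1 hb).2

lemma cumSize_succ_eq_one_add_sum (v : Fin n → ℝ) (k : ℕ) :
    cumSize p v (k + 1) =
      1 + ∑ m ∈ Finset.range k, ∑ j, (genInterval p v m).indicator (fun _ => (1 : ℝ)) (v j) := by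
  induction k with
  | zero => simp
  | succ k ih => rw [cumSize_add_two, ih, Finset.sum_range_succ, add_assoc]

lemma cumSize_le (hp : 0 ≤ p) {v : Fin n → ℝ} (hv : ∀ i, v i ∉ endpoints p) (k : ℕ) :
    cumSize p v k ≤ n + 1 := by
  rcases k with _ | k
  · simp only [cumSize_zero]; positivity
  calc cumSize p v (k + 1)
      = 1 + ∑ j, ∑ m ∈ Finset.range k, (genInterval p v m).indicator (fun _ => (1 : ℝ)) (v j) := by
        rw [cumSize_succ_eq_one_add_sum, Finset.sum_comm]
    _ ≤ 1 + ∑ _j : Fin n, (1 : ℝ) := by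
        gcongr with j
        exact sum_indicator_genInterval_le_one p hp v (hv j) k
    _ = n + 1 := by simp [add_comm]

lemma cumSize_insertNth (j : Fin (n + 1)) {x : ℝ} {v : Fin n → ℝ} {k : ℕ}
    (h : ∀ m, m + 1 < k → x ∉ genInterval p v m) :
    cumSize p (j.insertNth x v) k = cumSize p v k := by
  induction k using Nat.strong_induction_on with
  | _ k ih =>
    match k with
    | 0 | 1 => rfl
    | k + 2 =>
      have h₁ := ih (k + 1) (by omega) fun m hm => h m (by omega)
      have h₀ := ih k (by omega) fun m hm => h m (by omega)
      have hI : genInterval p (j.insertNth x v) k = genInterval p v k := by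
        rw [genInterval, genInterval, h₁, h₀]
      rw [cumSize_add_two, cumSize_add_two, h₁, hI, Fin.sum_univ_succAbove _ j,
        Fin.insertNth_apply_same, indicator_of_notMem (h k (by omega)), zero_add]
      simp only [Fin.insertNth_apply_succAbove]

lemma genInterval_insertNth (j : Fin (n + 1)) {x : ℝ} {v : Fin n → ℝ} {k : ℕ}
    (h : ∀ m < k, x ∉ genInterval p v m) :
    genInterval p (j.insertNth x v) k = genInterval p v k := by
  rw [genInterval, genInterval, cumSize_insertNth p j fun m hm => h m (by omega),
    cumSize_insertNth p j fun m hm => h m (by omega)]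

lemma mem_genInterval_insertNth (hp : 0 ≤ p) {x : ℝ} (hx : x ∉ endpoints p)
    (j : Fin (n + 1)) (v : Fin n → ℝ) (k : ℕ) :
    x ∈ genInterval p (j.insertNth x v) k ↔ x ∈ genInterval p v k := by
  have mem_of_mem {k : ℕ} (hk : x ∈ genInterval p v k) :
      x ∈ genInterval p (j.insertNth x v) k := by
    rwa [genInterval_insertNth p j fun m hm hm' => hm.ne (eq_of_mem_genInterval p hp hx hm' hk)]
  refine ⟨fun hw => ?_, mem_of_mem⟩
  by_cases h : ∃ m < k, x ∈ genInterval p v m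
  · obtain ⟨m, hmk, hm⟩ := h
    exact absurd (eq_of_mem_genInterval p hp hx (mem_of_mem hm) hw) hmk.ne
  · rwa [genInterval_insertNth p j fun m hm hxm => h ⟨m, hm, hxm⟩] at hw

lemma measurable_cumSize (k : ℕ) : Measurable fun v : Fin n → ℝ => cumSize p v k := by
  induction k using Nat.strong_induction_on with
  | _ k ih =>
    match k with
    | 0 | 1 => exact measurable_const
    | k + 2 =>
      have h₁ := ih (k + 1) (by omega)
      have h₀ := ih k (by omega)
      simp only [cumSize_add_two, genInterval]
      exact h₁.add <| Finset.measurable_sum _ fun j _ => measurable_indicator_Icc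
        ((h₁.const_mul p).const_sub 1) ((h₀.const_mul p).const_sub 1) (measurable_pi_apply j)

lemma integrable_indicator_genInterval {α : Type*} [MeasurableSpace α] {μ : Measure α}
    [IsFiniteMeasure μ] {V : α → Fin n → ℝ} {X : α → ℝ} (hV : Measurable V) (hX : Measurable X)
    (k : ℕ) : Integrable (fun a => (genInterval p (V a) k).indicator (fun _ => (1 : ℝ)) (X a)) μ :=
  .of_bound (measurable_indicator_Icc
      ((((measurable_cumSize p (k + 1)).comp hV).const_mul p).const_sub 1)
      ((((measurable_cumSize p k).comp hV).const_mul p).const_sub 1) hX).aestronglyMeasurable 1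
    (ae_of_all _ fun _ => (norm_indicator_le_norm_self _ _).trans norm_one.le)

local notation "𝕌" => volume.restrict (Icc (0 : ℝ) 1)

instance : IsProbabilityMeasure 𝕌 := ⟨by simp⟩

lemma measureReal_unitInterval_Icc {a b : ℝ} (ha : 0 ≤ a) (hab : a ≤ b) (hb : b ≤ 1) :
    (𝕌).real (Icc a b) = b - a := by
  rw [measureReal_restrict_apply measurableSet_Icc,
    inter_eq_self_of_subset_left (Icc_subset_Icc ha hb), Real.volume_real_Icc_of_le hab]

lemma measureReal_genInterval (hp : 0 ≤ p) (hpn : p * (n + 1) ≤ 1) {v : Fin n → ℝ}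
    (hv : ∀ i, v i ∉ endpoints p) (k : ℕ) :
    (𝕌).real (genInterval p v k) = p * (cumSize p v (k + 1) - cumSize p v k) := by
  have hle := cumSize_le p hp hv (k + 1)
  have hmono := cumSize_mono p v k.le_succ
  have hnonneg := cumSize_nonneg p v k
  rw [genInterval, measureReal_unitInterval_Icc (by nlinarith) (by nlinarith) (by nlinarith)]
  ring

lemma ae_notMem_endpoints : ∀ᵐ x ∂𝕌, x ∉ endpoints p :=
  (countable_range _).ae_notMem _

lemma ae_forall_notMem_endpoints :
    ∀ᵐ v ∂(Measure.pi fun _ : Fin n => 𝕌), ∀ i, v i ∉ endpoints p :=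
  ae_all_iff.2 fun i =>
    (Measure.tendsto_eval_ae_ae (μ := fun _ => 𝕌) (i := i)).eventually (ae_notMem_endpoints p)

lemma integral_indicator_genInterval_apply (hp : 0 ≤ p) (hpn : p * (n + 1) ≤ 1)
    (j : Fin (n + 1)) (k : ℕ) :
    ∫ v, (genInterval p v k).indicator (fun _ => (1 : ℝ)) (v j) ∂(Measure.pi fun _ => 𝕌) =
      p * ∫ v, (cumSize p v (k + 1) - cumSize p v k) ∂(Measure.pi fun _ : Fin n => 𝕌) := by
  rw [integral_pi_eq_integral_integral_insertNth 𝕌 j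
    (integrable_indicator_genInterval p measurable_id' (measurable_pi_apply j) k),
    ← integral_const_mul]
  refine integral_congr_ae ?_
  filter_upwards [ae_forall_notMem_endpoints p] with v hv
  calc _ = ∫ x, (genInterval p v k).indicator 1 x ∂𝕌 := by
        refine integral_congr_ae ?_
        filter_upwards [ae_notMem_endpoints p] with x hx
        rw [Fin.insertNth_apply_same]
        exact indicator_eq_indicator (mem_genInterval_insertNth p hp hx j v k) rfl
    _ = p * (cumSize p v (k + 1) - cumSize p v k) := by
        rw [integral_indicator_one (s := genInterval p v k) measurableSet_Icc,
          measureReal_genInterval p hp hpn hv]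

theorem integral_cumSize_succ_sub_cumSize (hp : 0 ≤ p) :
    ∀ {n : ℕ}, p * n ≤ 1 → ∀ k : ℕ,
      ∫ v, (cumSize p v (k + 1) - cumSize p v k) ∂(Measure.pi fun _ : Fin n => 𝕌) =
        n.descFactorial k * p ^ k
  | n, _, 0 => by simp
  | 0, _, k + 1 => by simp [cumSize_add_two]
  | n + 1, hpn, k + 1 => by
    have hpn' : p * n ≤ 1 := by push_cast at hpn; nlinarith
    calc ∫ v, (cumSize p v (k + 2) - cumSize p v (k + 1)) ∂(Measure.pi fun _ => 𝕌)
        = ∑ j, ∫ v, (genInterval p v k).indicator (fun _ => (1 : ℝ)) (v j)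
            ∂(Measure.pi fun _ => 𝕌) := by
          simp_rw [cumSize_add_two, add_sub_cancel_left]
          exact integral_finsetSum _ fun j _ =>
            integrable_indicator_genInterval p measurable_id' (measurable_pi_apply j) k
      _ = ∑ _j : Fin (n + 1), p * (n.descFactorial k * p ^ k) := by
          refine Finset.sum_congr rfl fun j _ => ?_
          rw [integral_indicator_genInterval_apply p hp (by exact_mod_cast hpn) j k,
            integral_cumSize_succ_sub_cumSize hp hpn' k]
      _ = (n + 1).descFactorial (k + 1) * p ^ (k + 1) := by
          rw [Finset.sum_const, Finset.card_univ, Fintype.card_fin, nsmul_eq_mul,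
            Nat.succ_descFactorial_succ]
          push_cast
          ring

lemma sum_range_eq_cumSize {ε : ℕ → ℝ} {v : Fin n → ℝ} (h₀ : ε 0 = 1)
    (hε : ∀ k, 1 ≤ k → ε k = ∑ j, (Icc (1 - p * ∑ i ∈ Finset.range k, ε i)
      (1 - p * ∑ i ∈ Finset.range (k - 1), ε i)).indicator (fun _ => (1 : ℝ)) (v j))
    (k : ℕ) : ∑ i ∈ Finset.range k, ε i = cumSize p v k := by
  induction k using Nat.strong_induction_on with
  | _ k ih =>
    match k with
    | 0 => simp
    | 1 => simp [h₀]
    | k + 2 =>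
      rw [Finset.sum_range_succ, ih (k + 1) (by omega), hε (k + 1) (by omega),
        ih (k + 1) (by omega), Nat.add_sub_cancel, ih k (by omega), cumSize_add_two]
      rfl

lemma eq_cumSize_succ_sub_cumSize {ε : ℕ → ℝ} {v : Fin n → ℝ} (h₀ : ε 0 = 1)
    (hε : ∀ k, 1 ≤ k → ε k = ∑ j, (Icc (1 - p * ∑ i ∈ Finset.range k, ε i)
      (1 - p * ∑ i ∈ Finset.range (k - 1), ε i)).indicator (fun _ => (1 : ℝ)) (v j))
    (k : ℕ) : ε k = cumSize p v (k + 1) - cumSize p v k := by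
  rw [← sum_range_eq_cumSize p h₀ hε, ← sum_range_eq_cumSize p h₀ hε, Finset.sum_range_succ,
    add_sub_cancel_left]

end Avalanche

theorem avalanche_generation_mean_general
    {Ω : Type*} [MeasurableSpace Ω] (μ : Measure Ω) [IsProbabilityMeasure μ]
    (N : ℕ) (p : ℝ) (hp : 0 < p) (hp' : p < 1 / N)
    (U : Fin N → Ω → ℝ)
    (hindep : iIndepFun U μ)
    (hunif : ∀ j, Measure.map (U j) μ = volume.restrict (Set.Icc (0 : ℝ) 1))
    (ε : ℕ → Ω → ℝ)
    (hε0 : ε 0 = fun _ => 1)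
    (hεk : ∀ k, 1 ≤ k → ε k = fun ω => ∑ j : Fin N,
      Set.indicator
        (Set.Icc (1 - p * ∑ i ∈ Finset.range k, ε i ω)
                 (1 - p * ∑ i ∈ Finset.range (k - 1), ε i ω))
        (fun _ => (1 : ℝ)) (U j ω)) :
    ∀ k, 1 ≤ k → k ≤ N →
      ∫ ω, ε k ω ∂μ = ((N.factorial : ℝ) / (N - k).factorial) * p ^ k := by
  intro k hk1 hkN
  have hU : ∀ j, AEMeasurable (U j) μ := fun j =>
    .of_map_ne_zero (by rw [hunif j]; exact IsProbabilityMeasure.ne_zero _)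
  have hlaw : μ.map (fun ω j => U j ω) = Measure.pi fun _ => volume.restrict (Icc (0 : ℝ) 1) := by
    rw [hindep.map_fun_eq_pi_map hU, funext hunif]
  have hpN : p * N ≤ 1 := ((lt_div_iff₀ (Nat.cast_pos.2 (by omega))).1 hp').le
  calc ∫ ω, ε k ω ∂μ
      = ∫ v, (Avalanche.cumSize p v (k + 1) - Avalanche.cumSize p v k)
          ∂(μ.map fun ω j => U j ω) := by
        rw [integral_map (f := fun v => Avalanche.cumSize p v (k + 1) - Avalanche.cumSize p v k)
          (aemeasurable_pi_lambda _ hU) ((Avalanche.measurable_cumSize p _).sub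
            (Avalanche.measurable_cumSize p _)).aestronglyMeasurable]
        congr with ω
        exact Avalanche.eq_cumSize_succ_sub_cumSize p (congrFun hε0 ω)
          (fun k hk => congrFun (hεk k hk) ω) k
    _ = N.descFactorial k * p ^ k := by
        rw [hlaw, Avalanche.integral_cumSize_succ_sub_cumSize p hp.le hpN k]
    _ = (N.factorial : ℝ) / (N - k).factorial * p ^ k := by
        rw [← Nat.factorial_mul_descFactorial hkN]
        push_cast
        field_simp

theorem avalanche_generation_mean
    {Ω : Type*} [MeasurableSpace Ω] (μ : Measure Ω) [IsProbabilityMeasure μ]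
    (N : ℕ) (hN : 0 < N) (p : ℝ) (hp : 0 < p) (hp' : p < 1 / N)
    (U : Fin N → Ω → ℝ)
    (hmeas : ∀ j, Measurable (U j))
    (hindep : iIndepFun U μ)
    (hunif : ∀ j, Measure.map (U j) μ = volume.restrict (Set.Icc (0 : ℝ) 1))
    (ε : ℕ → Ω → ℝ)
    (hε0 : ε 0 = fun _ => 1)
    (hεk : ∀ k, 1 ≤ k → ε k = fun ω => ∑ j : Fin N,
      Set.indicator
        (Set.Icc (1 - p * ∑ i ∈ Finset.range k, ε i ω)
                 (1 - p * ∑ i ∈ Finset.range (k - 1), ε i ω))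
        (fun _ => (1 : ℝ)) (U j ω)) :
    ∀ k, 1 ≤ k → k ≤ N →
      ∫ ω, ε k ω ∂μ = ((N.factorial : ℝ) / (N - k).factorial) * p ^ k :=
  avalanche_generation_mean_general μ N p hp hp' U hindep hunif ε hε0 hεk
end
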